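/- Let G be a finite group and N a normal subgroup of G such that for every n ∈ N the real conjugacy class of n in G intersected with N equals the real conjugacy class of n in N, i.e., (n)^±_G ∩ N = (n)^±_N. Let V be a finite-dimensional real representation of N and let K be any subgroup of G. Then |K| · dim_ℝ (Ind_N^G(V))^K = [G : N] · |K ∩ N| · dim_ℝ V^{K ∩ N}, where for a subgroup L the superscript L denotes the subspace of vectors fixed by every element of L. -/

import Mathlib

/-!
STATEMENT 12: Let `G` be a finite group and `N` a normal subgroup of `G` such that for
every `n ∈ N` the real conjugacy class of `n` in `G` intersected with `N` equals the real
conjugacy class of `n` in `N`, i.e. `(n)^±_G ∩ N = (n)^±_N`. Let `V` be a finite-dimensional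
real representation of `N` and let `K` be any subgroup of `G`. Then
`|K| · dim_ℝ (Ind_N^G(V))^K = [G : N] · |K ∩ N| · dim_ℝ V^{K ∩ N}`, where `(-)^L` denotes
the subspace of vectors fixed by every element of `L`.

The induced representation is realized concretely: `Ind_N^G(V)` is the space of functions
`f : G → V` with `f (n * x) = ρ n (f x)` for `n ∈ N`, on which `G` acts by right
translation. `K ∩ N`, viewed as a subgroup of `N`, is `K.subgroupOf N`. -/

variable {G : Type} [Group G]

/-- The carrier of the induced representation `Ind_H^G V`: the space of functions
`f : G → V` satisfying `f (h * x) = ρ h (f x)` for all `h ∈ H`, `x ∈ G`. -/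
def indCarrier (H : Subgroup G) {V : Type} [AddCommGroup V] [Module ℝ V]
    (ρ : Representation ℝ ↥H V) : Submodule ℝ (G → V) where
  carrier := {f | ∀ (h : ↥H) (x : G), f ((h : G) * x) = ρ h (f x)}
  add_mem' := by
    intro a b ha hb h x
    simp only [Pi.add_apply, ha h x, hb h x, map_add]
  zero_mem' := by
    intro h x
    simp
  smul_mem' := by
    intro c a ha h x
    simp only [Pi.smul_apply, ha h x, map_smul]

/-- The induced representation `Ind_H^G V` of a real representation `ρ` of `H ≤ G`:
`G` acts on `indCarrier H ρ` by right translation. -/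
noncomputable def indRep (H : Subgroup G) {V : Type} [AddCommGroup V] [Module ℝ V]
    (ρ : Representation ℝ ↥H V) : Representation ℝ G ↥(indCarrier H ρ) where
  toFun g := (LinearMap.funLeft ℝ V (fun x => x * g)).restrict
    (p := indCarrier H ρ) (q := indCarrier H ρ)
    (fun f hf h x => by
      simpa [LinearMap.funLeft_apply, mul_assoc] using hf h (x * g))
  map_one' := by
    apply LinearMap.ext
    intro f
    apply Subtype.ext
    funext x
    simp [LinearMap.restrict_apply, LinearMap.funLeft_apply]
  map_mul' g g' := by
    apply LinearMap.ext
    intro f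
    apply Subtype.ext
    funext x
    exact congrArg (f : G → V) (mul_assoc x g g').symm

/-- The submodule of vectors fixed by every element of a subgroup `K`. -/
def fixedSubmodule {V : Type} [AddCommGroup V] [Module ℝ V]
    (ρ : Representation ℝ G V) (K : Subgroup G) : Submodule ℝ V where
  carrier := {v | ∀ g ∈ K, ρ g v = v}
  add_mem' := by
    intro a b ha hb g hg
    simp [map_add, ha g hg, hb g hg]
  zero_mem' := by
    intro g hg
    simp
  smul_mem' := by
    intro c v hv g hg
    simp [map_smul, hv g hg]

/-- The real dimension of the subspace of `K`-fixed vectors. -/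
noncomputable def fixedDim {V : Type} [AddCommGroup V] [Module ℝ V]
    (ρ : Representation ℝ G V) (K : Subgroup G) : ℕ :=
  Module.finrank ℝ ↥(fixedSubmodule ρ K)

/-! By averaging, `|L| · dim W^L = ∑_{l ∈ L} χ_W(l)` for every finite group `L`, so both sides
are character sums. The character of `Ind_N^G V` at `g` is `∑_{q ∈ G/N} χ̇(q g q⁻¹)`, where `χ̇` is
the character of `V` extended by zero off `N`. The hypothesis on real classes makes
`χ(c) + χ(c⁻¹) = χ(n) + χ(n⁻¹)` whenever `n, c ∈ N` are conjugate in `G`, and since `K` is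
closed under inversion this removes the conjugation by `q` from `∑_{k ∈ K} χ̇(q k q⁻¹)`. The
left side is therefore `[G : N] · ∑_{k ∈ K ∩ N} χ(k) = [G : N] · |K ∩ N| · dim V^{K ∩ N}`. -/

open LinearMap

section FixedPoints

variable {W : Type} [AddCommGroup W] [Module ℝ W]

lemma fixedSubmodule_eq_invariants (ρ : Representation ℝ G W) (L : Subgroup G) :
    fixedSubmodule ρ L = Representation.invariants (ρ.comp L.subtype) := by
  ext v
  exact ⟨fun h g => h g g.2, fun h g hg => h ⟨g, hg⟩⟩

lemma card_mul_fixedDim [FiniteDimensional ℝ W] (ρ : Representation ℝ G W) (L : Subgroup G)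
    [Fintype L] : (Nat.card L : ℝ) * fixedDim ρ L = ∑ l : L, ρ.character l := by
  have hL : (Nat.card L : ℝ) ≠ 0 := by exact_mod_cast Nat.card_pos.ne'
  have : Invertible (Nat.card L : ℝ) := invertibleOfNonzero hL
  rw [fixedDim, fixedSubmodule_eq_invariants,
    ← Representation.card_inv_mul_sum_char_eq_finrank (ρ.comp L.subtype), ← mul_assoc,
    mul_inv_cancel₀ hL, one_mul]
  rfl

end FixedPoints

lemma trace_pi_comp_proj {R ι V : Type} [Field R] [Fintype ι] [DecidableEq ι] [AddCommGroup V]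
    [Module R V] [FiniteDimensional R V] (σ : ι → ι) (A : ι → V →ₗ[R] V) :
    trace R (ι → V) (pi fun i => A i ∘ₗ proj (σ i)) =
      ∑ i, if σ i = i then trace R V (A i) else 0 := by
  let b := Module.finBasis R V
  rw [trace_eq_matrix_trace R (Pi.basis fun _ : ι => b), Matrix.trace,
    ← Finset.univ_sigma_univ, Finset.sum_sigma]
  refine Fintype.sum_congr _ _ fun i => ?_
  by_cases h : σ i = i
  · rw [if_pos h, trace_eq_matrix_trace R b, Matrix.trace]
    refine Fintype.sum_congr _ _ fun k => ?_
    simp [toMatrix_apply, h]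
  · rw [if_neg h]
    refine Finset.sum_eq_zero fun k _ => ?_
    simp [toMatrix_apply, h]

lemma Subgroup.Normal.conj_mem_iff {N : Subgroup G} (hN : N.Normal) (x g : G) :
    x * g * x⁻¹ ∈ N ↔ g ∈ N := by
  rw [mul_assoc, hN.mem_comm_iff, inv_mul_cancel_right]

section ExtendByZero

variable (N : Subgroup G) (φ : N → ℝ)

open Classical in
noncomputable def extendByZero (g : G) : ℝ :=
  if h : g ∈ N then φ ⟨g, h⟩ else 0

@[simp]
lemma extendByZero_coe (n : N) : extendByZero N φ n = φ n := by
  simp [extendByZero]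

lemma extendByZero_of_notMem {g : G} (hg : g ∉ N) : extendByZero N φ g = 0 := by
  simp [extendByZero, hg]

lemma sum_extendByZero (K : Subgroup G) [Fintype K] [Fintype (K.subgroupOf N)] :
    ∑ k : K, extendByZero N φ k = ∑ m : K.subgroupOf N, φ m := by
  let incl (m : K.subgroupOf N) : K := ⟨(m : N), Subgroup.mem_subgroupOf.mp m.2⟩
  have hincl : Function.Injective incl := fun a b h =>
    Subtype.ext (Subtype.ext (congrArg (fun k : K => (k : G)) h))
  refine (Fintype.sum_of_injective incl hincl _ _ ?_ ?_).symm
  · intro k hk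
    refine extendByZero_of_notMem N φ fun hkN => hk ⟨⟨⟨k, hkN⟩, ?_⟩, rfl⟩
    exact Subgroup.mem_subgroupOf.mpr k.2
  · intro m
    exact (extendByZero_coe N φ m).symm

variable {N φ}

lemma add_inv_eq_of_isConj (hφ : ∀ u a, φ (u * a * u⁻¹) = φ a)
    (hconj : ∀ n c : N, IsConj (n : G) c → IsConj n c ∨ IsConj n⁻¹ c) {n c : N}
    (hnc : IsConj (n : G) c) : φ c + φ c⁻¹ = φ n + φ n⁻¹ := by
  have key : ∀ a b : N, IsConj a b → φ b + φ b⁻¹ = φ a + φ a⁻¹ := by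
    intro a b hab
    obtain ⟨u, rfl⟩ := isConj_iff.mp hab
    have hinv : (u * a * u⁻¹)⁻¹ = u * a⁻¹ * u⁻¹ := by group
    rw [hinv, hφ, hφ]
  rcases hconj n c hnc with h | h
  · exact key n c h
  · rw [key _ _ h, inv_inv, add_comm]

lemma extendByZero_conj_add_inv [N.Normal] (hφ : ∀ u a, φ (u * a * u⁻¹) = φ a)
    (hconj : ∀ n c : N, IsConj (n : G) c → IsConj n c ∨ IsConj n⁻¹ c) (x g : G) :
    extendByZero N φ (x * g * x⁻¹) + extendByZero N φ (x * g⁻¹ * x⁻¹) =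
      extendByZero N φ g + extendByZero N φ g⁻¹ := by
  by_cases hg : g ∈ N
  · lift g to N using hg
    let c : N := ⟨x * g * x⁻¹, ‹N.Normal›.conj_mem g g.2 x⟩
    have hc : x * (g : G)⁻¹ * x⁻¹ = (c⁻¹ : N) := by simp [c, mul_assoc]
    rw [show x * (g : G) * x⁻¹ = c from rfl, hc, ← Subgroup.coe_inv]
    simp only [extendByZero_coe]
    exact add_inv_eq_of_isConj hφ hconj (isConj_iff.mpr ⟨x, rfl⟩ : IsConj (g : G) c)
  · have hgi : g⁻¹ ∉ N := by rwa [inv_mem_iff]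
    rw [extendByZero_of_notMem N φ hg, extendByZero_of_notMem N φ hgi,
      extendByZero_of_notMem N φ (by rwa [‹N.Normal›.conj_mem_iff]),
      extendByZero_of_notMem N φ (by rwa [‹N.Normal›.conj_mem_iff])]

lemma sum_extendByZero_conj [N.Normal] (hφ : ∀ u a, φ (u * a * u⁻¹) = φ a)
    (hconj : ∀ n c : N, IsConj (n : G) c → IsConj n c ∨ IsConj n⁻¹ c) (K : Subgroup G) [Fintype K]
    (x : G) : ∑ k : K, extendByZero N φ (x * k * x⁻¹) = ∑ k : K, extendByZero N φ k := by
  have hpair := Fintype.sum_congr _ _ fun k : K => extendByZero_conj_add_inv hφ hconj x k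
  have hinv (f : G → ℝ) : ∑ k : K, f (k : G)⁻¹ = ∑ k : K, f k := by
    simpa using Equiv.sum_comp (Equiv.inv K) fun k => f k
  rw [Finset.sum_add_distrib, Finset.sum_add_distrib,
    hinv fun g => extendByZero N φ (x * g * x⁻¹), hinv] at hpair
  linarith

end ExtendByZero

section Induced

variable (N : Subgroup G) [N.Normal] {V : Type} [AddCommGroup V] [Module ℝ V]
  (ρ : Representation ℝ N V)

noncomputable def transversalFactor (x : G) : N :=
  ⟨x * (x : G ⧸ N).out⁻¹, by
    obtain ⟨h, hh⟩ := QuotientGroup.mk_out_eq_mul N x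
    simpa [hh, mul_assoc] using ‹N.Normal›.conj_mem _ (N.inv_mem h.2) x⟩

@[simp]
lemma transversalFactor_mul_out (x : G) : (transversalFactor N x : G) * (x : G ⧸ N).out = x := by
  simp [transversalFactor]

lemma transversalFactor_mul (h : N) (x : G) :
    transversalFactor N (h * x) = h * transversalFactor N x := by
  have hq : ((h * x : G) : G ⧸ N) = x := by
    rw [QuotientGroup.mk_mul, (QuotientGroup.eq_one_iff _).mpr h.2, one_mul]
  ext
  simp [transversalFactor, hq, mul_assoc]

@[simp]
lemma transversalFactor_out (q : G ⧸ N) : transversalFactor N q.out = 1 := by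
  ext
  simp [transversalFactor]

noncomputable def indCarrierEquiv : indCarrier N ρ ≃ₗ[ℝ] (G ⧸ N → V) where
  toFun f q := (f : G → V) q.out
  map_add' _ _ := rfl
  map_smul' _ _ := rfl
  invFun F := ⟨fun x => ρ (transversalFactor N x) (F x), fun h x => by
    change ρ (transversalFactor N (h * x)) (F (h * x : G)) =
      ρ h (ρ (transversalFactor N x) (F x))
    rw [transversalFactor_mul, map_mul, QuotientGroup.mk_mul,
      (QuotientGroup.eq_one_iff _).mpr h.2, one_mul, Module.End.mul_apply]⟩
  left_inv f := by
    ext x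
    have hf := f.2 (transversalFactor N x) (x : G ⧸ N).out
    rw [transversalFactor_mul_out] at hf
    exact hf.symm
  right_inv F := by
    funext q
    simp

lemma indCarrierEquiv_conj_indRep (g : G) :
    (indCarrierEquiv N ρ).conj (indRep N ρ g) =
      pi fun q : G ⧸ N => ρ (transversalFactor N (q.out * g)) ∘ₗ proj (q * g) := by
  ext F q
  change ρ (transversalFactor N (q.out * g)) (F (q.out * g : G)) = _
  rw [QuotientGroup.mk_mul, QuotientGroup.out_eq']
  rfl

lemma character_indRep [Finite G] [Fintype (G ⧸ N)] [FiniteDimensional ℝ V] (g : G) :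
    (indRep N ρ).character g =
      ∑ q : G ⧸ N, extendByZero N ρ.character (q.out * g * q.out⁻¹) := by
  classical
  rw [Representation.character, ← trace_conj' _ (indCarrierEquiv N ρ),
    indCarrierEquiv_conj_indRep, trace_pi_comp_proj]
  refine Fintype.sum_congr _ _ fun q => ?_
  by_cases hg : g ∈ N
  · have hq : q * (g : G ⧸ N) = q := by rwa [mul_eq_left, QuotientGroup.eq_one_iff]
    have hconj : q.out * g * q.out⁻¹ = transversalFactor N (q.out * g) := by
      simp [transversalFactor, hq]
    rw [if_pos hq, hconj, extendByZero_coe]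
    rfl
  · rw [if_neg (by rwa [mul_eq_left, QuotientGroup.eq_one_iff]),
      extendByZero_of_notMem N _ (by rwa [‹N.Normal›.conj_mem_iff])]

end Induced

theorem statement12 {G : Type} [Group G] [Fintype G] (N : Subgroup G) [N.Normal]
    (hreal : ∀ n x : ↥N,
      (IsConj (n : G) (x : G) ∨ IsConj ((n : G))⁻¹ (x : G)) ↔ (IsConj n x ∨ IsConj n⁻¹ x))
    {V : Type} [AddCommGroup V] [Module ℝ V] [FiniteDimensional ℝ V]
    (ρ : Representation ℝ ↥N V) (K : Subgroup G) :
    Nat.card ↥K * fixedDim (indRep N ρ) K =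
      N.index * (Nat.card ↥(K.subgroupOf N) * fixedDim ρ (K.subgroupOf N)) := by
  classical
  let _ : Fintype (G ⧸ N) := Fintype.ofFinite _
  have hconj (n c : N) (h : IsConj (n : G) c) : IsConj n c ∨ IsConj n⁻¹ c :=
    (hreal n c).mp (Or.inl h)
  have hχ (u a : N) : ρ.character (u * a * u⁻¹) = ρ.character a := ρ.char_conj a u
  suffices (Nat.card K : ℝ) * fixedDim (indRep N ρ) K =
      N.index * ((Nat.card (K.subgroupOf N) : ℝ) * fixedDim ρ (K.subgroupOf N)) by
    exact_mod_cast this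
  rw [card_mul_fixedDim, card_mul_fixedDim, Subgroup.index_eq_card, Nat.card_eq_fintype_card]
  calc ∑ k : K, (indRep N ρ).character k
      = ∑ q : G ⧸ N, ∑ k : K, extendByZero N ρ.character (q.out * k * q.out⁻¹) := by
        simp only [character_indRep]
        exact Finset.sum_comm
    _ = ∑ q : G ⧸ N, ∑ k : K, extendByZero N ρ.character k := by
        simp only [sum_extendByZero_conj hχ hconj]
    _ = _ := by
        rw [Finset.sum_const, sum_extendByZero, Finset.card_univ, nsmul_eq_mul]
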